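/- Let β be a braid word on n ≥ 2 strands with inversion datum ι, and let s₀ be the ground state. Then each extended R-matrix value R_t(s₀) is a well-defined nonzero rational function, and the Laurent expansion of P(s₀) at x = 0 has leading term (−1)^N · q^{ℓ(β,ι)} · x^{d_x(s₀)}, where N is the number of crossings t with ε_t = −1 and (ι(e_BL(t)),ι(e_BR(t)),ι(e_TL(t)),ι(e_TR(t))) = (+,−,+,−). In particular, the leading coefficient of P(s₀) is, up to sign, the monomial q^{ℓ(β,ι)}. -/

import Mathlib

/-- A braid word on `n` strands with `m` letters. Strand positions are 0-indexed:
the index `p : Fin n` represents the mathematical position `p+1 ∈ {1,…,n}`.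
The `t`-th letter is a crossing of sign `ε t` involving the strand positions
`k t` and `k t + 1` (i.e. mathematical positions `k t + 1` and `k t + 2`). -/
structure BraidWord (n m : ℕ) where
  k : Fin m → ℕ
  hk : ∀ t, k t + 1 < n
  ε : Fin m → ℤ
  hε : ∀ t, ε t = 1 ∨ ε t = -1

theorem Fin.sum_ite_val_eq_zero_neg_one {n : ℕ} (hn : n ≠ 0) :
    ∑ p : Fin n, (if p.val = 0 then (0 : ℤ) else -1) = 1 - n := by
  obtain ⟨k, rfl⟩ := Nat.exists_eq_succ_of_ne_zero hn
  simp [Fin.sum_univ_succ]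

namespace BraidWord

variable {n m : ℕ}

/-- Segments of the closed braid diagram: `(p, t)` is the segment at horizontal
position `p` (0-indexed) and level `t` (mod `m`); the `t`-th letter has its bottom
at level `t` and its top at level `t+1`, and `(p, 0)` is the `p`-th closure segment. -/
abbrev Seg (n m : ℕ) := Fin n × Fin m

/-- Segment adjacent to the `t`-th crossing at the bottom left. -/
def eBL (β : BraidWord n m) (t : Fin m) : Seg n m :=
  (⟨β.k t, by have := β.hk t; omega⟩, t)

/-- Segment adjacent to the `t`-th crossing at the bottom right. -/
def eBR (β : BraidWord n m) (t : Fin m) : Seg n m :=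
  (⟨β.k t + 1, β.hk t⟩, t)

/-- Segment adjacent to the `t`-th crossing at the top left. -/
def eTL [NeZero m] (β : BraidWord n m) (t : Fin m) : Seg n m :=
  (⟨β.k t, by have := β.hk t; omega⟩, t + 1)

/-- Segment adjacent to the `t`-th crossing at the top right. -/
def eTR [NeZero m] (β : BraidWord n m) (t : Fin m) : Seg n m :=
  (⟨β.k t + 1, β.hk t⟩, t + 1)

/-- The writhe of a braid word: the sum of the signs of its crossings. -/
def writhe (β : BraidWord n m) : ℤ := ∑ t, β.ε t

/-- The allowed sign patterns `(BL, BR, TL, TR)` around a crossing of sign `e`. -/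
def allowedQuad (e a b c d : ℤ) : Prop :=
  if e = 1 then
    (a = 1 ∧ b = -1 ∧ c = -1 ∧ d = 1) ∨ (a = -1 ∧ b = 1 ∧ c = 1 ∧ d = -1) ∨
    (a = -1 ∧ b = -1 ∧ c = -1 ∧ d = -1) ∨ (a = -1 ∧ b = 1 ∧ c = -1 ∧ d = 1) ∨
    (a = 1 ∧ b = 1 ∧ c = 1 ∧ d = 1)
  else
    (a = 1 ∧ b = -1 ∧ c = -1 ∧ d = 1) ∨ (a = -1 ∧ b = 1 ∧ c = 1 ∧ d = -1) ∨
    (a = -1 ∧ b = -1 ∧ c = -1 ∧ d = -1) ∨ (a = 1 ∧ b = -1 ∧ c = 1 ∧ d = -1) ∨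
    (a = 1 ∧ b = 1 ∧ c = 1 ∧ d = 1)

/-- An inversion datum on a braid word: a `±1`-assignment to each segment,
constant along strands away from crossings, with allowed patterns at crossings. -/
def IsInvDatum [NeZero m] (β : BraidWord n m) (ι : Seg n m → ℤ) : Prop :=
  (∀ e : Seg n m, ι e = 1 ∨ ι e = -1) ∧
  (∀ (p : Fin n) (t : Fin m), p.val ≠ β.k t → p.val ≠ β.k t + 1 → ι (p, t) = ι (p, t + 1)) ∧
  (∀ t : Fin m, allowedQuad (β.ε t) (ι (β.eBL t)) (ι (β.eBR t)) (ι (β.eTL t)) (ι (β.eTR t)))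

/-- A state on a braid word: an integer assignment to each segment, constant along
strands away from crossings, conserved at each crossing. -/
def IsState [NeZero m] (β : BraidWord n m) (s : Seg n m → ℤ) : Prop :=
  (∀ (p : Fin n) (t : Fin m), p.val ≠ β.k t → p.val ≠ β.k t + 1 → s (p, t) = s (p, t + 1)) ∧
  (∀ t : Fin m, s (β.eBL t) + s (β.eBR t) = s (β.eTL t) + s (β.eTR t))

/-- The sign of an integer, with the convention that the sign of `0` is `+1`. -/
def isign (a : ℤ) : ℤ := if 0 ≤ a then 1 else -1

/-- A state is valid for an inversion datum `ι` if its signs agree with `ι` and the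
inequalities required for the extended `R`-matrix to be nonzero hold at each crossing. -/
def IsValid [NeZero m] (β : BraidWord n m) (ι s : Seg n m → ℤ) : Prop :=
  β.IsState s ∧ (∀ e : Seg n m, isign (s e) = ι e) ∧
  ∀ t : Fin m,
    if β.ε t = 1 then s (β.eTR t) ≤ s (β.eBL t) ∨ (0 ≤ s (β.eTR t) ∧ s (β.eBL t) < 0)
    else s (β.eTL t) ≤ s (β.eBR t) ∨ (0 ≤ s (β.eTL t) ∧ s (β.eBR t) < 0)

/-- The ground state associated to an inversion datum: `s₀(e) = (ι(e) - 1)/2 ∈ {0, -1}`. -/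
def groundState (ι : Seg n m → ℤ) : Seg n m → ℤ := fun e => (ι e - 1) / 2

/-- The (minimal) x-degree of a state:
`d_x(s) = -(n-1)/2 + ∑_t ε_t (s(e_BR(t)) + s(e_TR(t)) + 1)/2`. -/
def xdeg [NeZero m] (β : BraidWord n m) (s : Seg n m → ℤ) : ℚ :=
  -((n : ℚ) - 1) / 2 +
    ∑ t : Fin m, (β.ε t : ℚ) * (((s (β.eBR t) : ℚ) + (s (β.eTR t) : ℚ) + 1) / 2)

/-- A pair (braid word, inversion datum) is nice if every valid state has nonnegative
x-degree and only finitely many valid states have x-degree below any given bound. -/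
def IsNice [NeZero m] (β : BraidWord n m) (ι : Seg n m → ℤ) : Prop :=
  (∀ s, β.IsValid ι s → 0 ≤ β.xdeg s) ∧
  ∀ M : ℝ, {s : Seg n m → ℤ | β.IsValid ι s ∧ ((β.xdeg s : ℚ) : ℝ) ≤ M}.Finite

/-- The invariant `ℓ(β,ι) = -∑_{p=2}^{n} ι(b_p)/2 + ∑_t ε_t (1 + ι(e_BR(t))·ι(e_TR(t)))/4`. -/
def ell [NeZero m] (β : BraidWord n m) (ι : Seg n m → ℤ) : ℚ :=
  -(∑ p : Fin n, if p.val = 0 then 0 else (ι (p, 0) : ℚ)) / 2 +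
    ∑ t : Fin m, (β.ε t : ℚ) * ((1 + (ι (β.eBR t) : ℚ) * (ι (β.eTR t) : ℚ)) / 4)

end BraidWord

open scoped Finset

/-- The field `ℚ(v)((u))` of formal Laurent series in `u = x^{1/2}` with coefficients
in the rational function field `ℚ(v)`, where `v = q^{1/2}`.  The two-variable rational
function field `ℚ(v,u)` embeds into it by Laurent expansion at `x = 0`. -/
noncomputable abbrev Kf : Type := LaurentSeries (RatFunc ℚ)

/-- The element `v = q^{1/2}` of `Kf`. -/
noncomputable def vv : Kf := HahnSeries.C (RatFunc.X)

/-- The element `u = x^{1/2}` of `Kf`. -/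
noncomputable def uu : Kf := HahnSeries.single (1 : ℤ) 1

/-- The quantum integer `[a] = (q^{a/2} - q^{-a/2})/(q^{1/2} - q^{-1/2})`, written in
terms of `w = q^{1/2}` (take `w = v` for `q` and `w = v⁻¹` for `q⁻¹`). -/
noncomputable def qint {K : Type*} [Field K] (w : K) (a : ℤ) : K :=
  (w ^ a - w ^ (-a)) / (w - w⁻¹)

/-- The balanced quantum binomial `qbinom(a, b)_{q} = q^{(a-b)b/2}·[a]⋯[a-b+1]/([b]⋯[1])`,
written in terms of `w = q^{1/2}`. -/
noncomputable def qbin {K : Type*} [Field K] (w : K) (a : ℤ) (b : ℕ) : K :=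
  w ^ ((a - b) * b) * (∏ i ∈ Finset.range b, qint w (a - i)) /
    ∏ i ∈ Finset.range b, qint w ((i : ℤ) + 1)

/-- The q-Pochhammer symbol `(z; Q)_b = (1 - z)(1 - Qz)⋯(1 - Q^{b-1}z)`. -/
noncomputable def pochK {K : Type*} [Field K] (z Q : K) (b : ℕ) : K :=
  ∏ i ∈ Finset.range b, (1 - Q ^ i * z)

/-- The extended `R`-matrix value of a state at the `t`-th crossing, as an element of
`ℚ(v,u) ⊆ ℚ(v)((u))` (with `q = v²`, `x = u²`), following Park's table. -/
noncomputable def Rmat {n m : ℕ} [NeZero m] (β : BraidWord n m)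
    (s : BraidWord.Seg n m → ℤ) (t : Fin m) : Kf :=
  let i := s (β.eBL t); let j := s (β.eBR t)
  let i' := s (β.eTL t); let j' := s (β.eTR t)
  if β.ε t = 1 then
    if j' ≤ i then
      vv ^ (2 * j * j') * (vv * uu) ^ (j + j' + 1) * qbin vv i (i - j').toNat *
        pochK (vv ^ (2 * (j + 1)) * uu ^ (2 : ℤ)) (vv ^ (2 : ℤ)) (i - j').toNat
    else if 0 ≤ j' ∧ i < 0 then
      vv ^ (2 * j * j') * (vv * uu) ^ (j + j' + 1) * qbin vv i j'.toNat *
        (pochK (vv ^ (2 * j) * uu ^ (2 : ℤ)) (vv ^ (-2 : ℤ)) (j' - i).toNat)⁻¹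
    else 0
  else
    if i' ≤ j then
      vv ^ (-(2 * i * i')) * (vv * uu) ^ (-(i + i' + 1)) * qbin vv⁻¹ j (j - i').toNat *
        pochK (vv ^ (2 * (-i - 1)) * uu ^ (-2 : ℤ)) (vv ^ (-2 : ℤ)) (j - i').toNat
    else if 0 ≤ i' ∧ j < 0 then
      vv ^ (-(2 * i * i')) * (vv * uu) ^ (-(i + i' + 1)) * qbin vv⁻¹ j i'.toNat *
        (pochK (vv ^ (-(2 * i)) * uu ^ (-2 : ℤ)) (vv ^ (2 : ℤ)) (i' - j).toNat)⁻¹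
    else 0

/-- The state sum contribution
`P(s) = (∏_{p=2}^{n} x^{-1/2} q^{-1/2 - s(b_p)}) · ∏_t R_t(s)` of a state `s`. -/
noncomputable def Pval {n m : ℕ} [NeZero m] (β : BraidWord n m)
    (s : BraidWord.Seg n m → ℤ) : Kf :=
  (∏ p : Fin n, if p.val = 0 then 1 else uu⁻¹ * vv ^ (-1 - 2 * s (p, 0))) *
    ∏ t : Fin m, Rmat β s t

/-- The number of crossings `t` with `ε_t = -1` whose inversion-datum pattern is
`(+,-,+,-)`. -/
noncomputable def negCount {n m : ℕ} [NeZero m] (β : BraidWord n m)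
    (ι : BraidWord.Seg n m → ℤ) : ℕ :=
  (Finset.univ.filter fun t : Fin m =>
    β.ε t = -1 ∧ ι (β.eBL t) = 1 ∧ ι (β.eBR t) = -1 ∧
      ι (β.eTL t) = 1 ∧ ι (β.eTR t) = -1).card

/-!
Taking the leading term `single x.order x.leadingCoeff` is multiplicative on Laurent series, so
the leading term of `P(s₀)` is the product of the leading terms of its factors. On the ground
state every label is `0` or `-1`, so all quantum binomials are empty products, every
Pochhammer symbol has at most one factor, and each `R_t(s₀)` is a monomial `v^a u^b`, possibly
divided by `1 - u^{±2}`. The factor `1 - u^{-2}`, which occurs exactly at the negative crossings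
of pattern `(+,-,+,-)`, has leading term `-u^{-2}`: this is the sign `(-1)^N`. Adding up the
exponents of `u` and `v` gives `2 d_x(s₀)` and `2 ℓ(β,ι)`.
-/

theorem Finset.prod_zpow_eq_zpow_sum₀ {ι G₀ : Type*} [CommGroupWithZero G₀] (s : Finset ι)
    {a : G₀} (ha : a ≠ 0) (f : ι → ℤ) : ∏ i ∈ s, a ^ f i = a ^ ∑ i ∈ s, f i := by
  induction s using Finset.cons_induction with
  | empty => simp
  | cons i s _ ih => rw [Finset.prod_cons, ih, Finset.sum_cons, zpow_add₀ ha]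

namespace HahnSeries

section LeadingTerm

variable {Γ R : Type*} [AddCommMonoid Γ] [LinearOrder Γ] [IsOrderedCancelAddMonoid Γ]

section Semiring

variable [Semiring R] [NoZeroDivisors R]

noncomputable def leadingTerm : R⟦Γ⟧ →*₀ R⟦Γ⟧ where
  toFun x := single x.order x.leadingCoeff
  map_zero' := by simp
  map_one' := by simp
  map_mul' x y := by
    rcases eq_or_ne x 0 with rfl | hx
    · simp
    rcases eq_or_ne y 0 with rfl | hy
    · simp
    simp [order_mul hx hy, single_mul_single]

theorem leadingTerm_apply (x : R⟦Γ⟧) : leadingTerm x = single x.order x.leadingCoeff := rfl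

theorem leadingTerm_single (a : Γ) (r : R) : leadingTerm (single a r) = single a r := by
  rcases eq_or_ne r 0 with rfl | hr
  · simp
  · rw [leadingTerm_apply, order_single hr, leadingCoeff_of_single]

theorem order_eq_and_leadingCoeff_eq_of_leadingTerm_eq {x : R⟦Γ⟧} {a : Γ} {r : R} (hr : r ≠ 0)
    (h : leadingTerm x = single a r) : x.order = a ∧ x.leadingCoeff = r := by
  have hc : x.leadingCoeff = r := by simpa [leadingTerm_apply] using congrArg leadingCoeff h
  refine ⟨?_, hc⟩
  simpa [leadingTerm_apply, order_single (hc ▸ hr), order_single hr] using congrArg order h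

theorem ne_zero_of_leadingTerm_eq {x : R⟦Γ⟧} {a : Γ} {r : R} (hr : r ≠ 0)
    (h : leadingTerm x = single a r) : x ≠ 0 := by
  rintro rfl
  exact single_ne_zero hr (by rw [← h, map_zero])

end Semiring

section Ring

variable [Ring R] [NoZeroDivisors R]

theorem leadingTerm_neg (x : R⟦Γ⟧) : leadingTerm (-x) = -leadingTerm x := by
  rw [leadingTerm_apply, leadingTerm_apply, order_neg, leadingCoeff_neg, single_neg]

theorem leadingTerm_sub_of_orderTop_lt {x y : R⟦Γ⟧} (h : x.orderTop < y.orderTop) :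
    leadingTerm (x - y) = leadingTerm x := by
  have hx : x ≠ 0 := by rintro rfl; simp at h
  have hxy : x - y ≠ 0 := by rw [← orderTop_ne_top, orderTop_sub h]; simpa
  have hord : (x - y).order = x.order := WithTop.coe_injective <| by
    rw [order_eq_orderTop_of_ne_zero hxy, order_eq_orderTop_of_ne_zero hx, orderTop_sub h]
  rw [leadingTerm_apply, leadingTerm_apply, hord, leadingCoeff_sub h]

theorem leadingTerm_sub_of_lt_orderTop {x y : R⟦Γ⟧} (h : y.orderTop < x.orderTop) :
    leadingTerm (x - y) = -leadingTerm y := by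
  rw [← neg_sub, leadingTerm_neg, leadingTerm_sub_of_orderTop_lt h]

variable [Nontrivial R]

theorem leadingTerm_one_sub_single_of_pos {a : Γ} (ha : 0 < a) (r : R) :
    leadingTerm (1 - single a r) = 1 := by
  rw [leadingTerm_sub_of_orderTop_lt (by rw [orderTop_one]; exact lt_orderTop_single ha), map_one]

theorem leadingTerm_one_sub_single_of_neg {a : Γ} (ha : a < 0) {r : R} (hr : r ≠ 0) :
    leadingTerm (1 - single a r) = -single a r := by
  rw [leadingTerm_sub_of_lt_orderTop (by rw [orderTop_one, orderTop_single hr]; exact_mod_cast ha),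
    leadingTerm_single]

end Ring

end LeadingTerm

theorem prod_single {ι Γ R : Type*} [AddCommMonoid Γ] [PartialOrder Γ]
    [IsOrderedCancelAddMonoid Γ] [CommSemiring R] (s : Finset ι) (a : ι → Γ) (r : ι → R) :
    ∏ i ∈ s, single (a i) (r i) = single (∑ i ∈ s, a i) (∏ i ∈ s, r i) := by
  induction s using Finset.cons_induction with
  | empty => simp
  | cons i s _ ih =>
    rw [Finset.prod_cons, ih, single_mul_single, Finset.sum_cons, Finset.prod_cons]

end HahnSeries

namespace BraidWord

variable {n m : ℕ} [NeZero m]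

theorem two_le (β : BraidWord n m) : 2 ≤ n := by
  have := β.hk 0
  omega

theorem two_mul_xdeg (β : BraidWord n m) (s : Seg n m → ℤ) :
    2 * β.xdeg s = ((1 - n + ∑ t, β.ε t * (s (β.eBR t) + s (β.eTR t) + 1) : ℤ) : ℚ) := by
  rw [xdeg]
  push_cast
  rw [mul_add, Finset.mul_sum]
  congr 1
  · ring
  · exact Finset.sum_congr rfl fun t _ => by ring

theorem two_mul_ell (β : BraidWord n m) {ι : Seg n m → ℤ} (hι : ∀ e, ι e = 1 ∨ ι e = -1) :
    2 * β.ell ι = ((-∑ p : Fin n, (if p.val = 0 then 0 else ι (p, 0)) +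
      ∑ t, β.ε t * ((1 + ι (β.eBR t) * ι (β.eTR t)) / 2) : ℤ) : ℚ) := by
  have hcrossing : ∀ t, ((β.ε t * ((1 + ι (β.eBR t) * ι (β.eTR t)) / 2) : ℤ) : ℚ) =
      2 * (β.ε t * ((1 + ι (β.eBR t) * ι (β.eTR t)) / 4)) := by
    intro t
    rcases hι (β.eBR t) with h | h <;> rcases hι (β.eTR t) with h' | h' <;>
      norm_num [h, h'] <;> ring
  rw [ell, Int.cast_add, Int.cast_sum, Finset.sum_congr rfl fun t _ => hcrossing t, mul_add,
    Finset.mul_sum]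
  push_cast [apply_ite]
  ring

end BraidWord

open HahnSeries BraidWord

theorem vv_eq_single : vv = single 0 RatFunc.X := C_apply _

theorem uu_eq_single : uu = single 1 1 := rfl

theorem leadingTerm_rmat_groundState {n m : ℕ} [NeZero m] (β : BraidWord n m)
    {ι : Seg n m → ℤ} (hι : β.IsInvDatum ι) (t : Fin m) :
    leadingTerm (Rmat β (groundState ι) t) =
      single (β.ε t * (groundState ι (β.eBR t) + groundState ι (β.eTR t) + 1))
        ((if β.ε t = -1 ∧ ι (β.eBL t) = 1 ∧ ι (β.eBR t) = -1 ∧ ι (β.eTL t) = 1 ∧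
            ι (β.eTR t) = -1 then -1 else 1) *
          RatFunc.X ^ (β.ε t * ((1 + ι (β.eBR t) * ι (β.eTR t)) / 2))) := by
  have hq := hι.2.2 t
  rcases β.hε t with he | he <;> norm_num [allowedQuad, he] at hq <;>
    rcases hq with ⟨h1, h2, h3, h4⟩ | ⟨h1, h2, h3, h4⟩ | ⟨h1, h2, h3, h4⟩ | ⟨h1, h2, h3, h4⟩ |
      ⟨h1, h2, h3, h4⟩ <;>
    simp [Rmat, groundState, he, h1, h2, h3, h4, qbin, pochK, vv_eq_single, uu_eq_single,
      single_mul_single, leadingTerm_single, leadingTerm_one_sub_single_of_pos,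
      leadingTerm_one_sub_single_of_neg, sq, RatFunc.X_ne_zero]

theorem closureFactor_groundState {n m : ℕ} [NeZero m] {ι : Seg n m → ℤ}
    (hι : ∀ e, ι e = 1 ∨ ι e = -1) (p : Fin n) :
    (if p.val = 0 then 1 else uu⁻¹ * vv ^ (-1 - 2 * groundState ι (p, 0)) : Kf) =
      single (if p.val = 0 then 0 else -1) (RatFunc.X ^ (if p.val = 0 then 0 else -ι (p, 0))) := by
  split_ifs
  · simp
  · rcases hι (p, 0) with h | h <;>
      simp [groundState, h, vv_eq_single, uu_eq_single, single_mul_single]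

theorem leadingTerm_pval_groundState {n m : ℕ} [NeZero m] (β : BraidWord n m)
    {ι : Seg n m → ℤ} (hι : β.IsInvDatum ι) :
    leadingTerm (Pval β (groundState ι)) =
      single (1 - n + ∑ t, β.ε t * (groundState ι (β.eBR t) + groundState ι (β.eTR t) + 1))
        ((-1) ^ negCount β ι * RatFunc.X ^ (-∑ p : Fin n, (if p.val = 0 then 0 else ι (p, 0)) +
          ∑ t, β.ε t * ((1 + ι (β.eBR t) * ι (β.eTR t)) / 2))) := by
  rw [Pval, map_mul, map_prod, map_prod, ← Fin.sum_ite_val_eq_zero_neg_one (by linarith [β.two_le])]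
  simp_rw [closureFactor_groundState hι.1, leadingTerm_single, leadingTerm_rmat_groundState β hι]
  rw [prod_single, prod_single, single_mul_single, Finset.prod_mul_distrib, Finset.prod_ite,
    Finset.prod_const, Finset.prod_const_one, mul_one, negCount,
    Finset.prod_zpow_eq_zpow_sum₀ _ RatFunc.X_ne_zero,
    Finset.prod_zpow_eq_zpow_sum₀ _ RatFunc.X_ne_zero, zpow_add₀ RatFunc.X_ne_zero, mul_left_comm, ← Finset.sum_neg_distrib]
  simp only [apply_ite Neg.neg, neg_zero]

theorem ground_state_leading_term (n m : ℕ) [NeZero m] (β : BraidWord n m)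
    (ι : BraidWord.Seg n m → ℤ) (hι : β.IsInvDatum ι) :
    (∀ t : Fin m, Rmat β (BraidWord.groundState ι) t ≠ 0) ∧
    Pval β (BraidWord.groundState ι) ≠ 0 ∧
    ∃ dd e : ℤ, (dd : ℚ) = 2 * β.xdeg (BraidWord.groundState ι) ∧
      (e : ℚ) = 2 * β.ell ι ∧
      (Pval β (BraidWord.groundState ι)).order = dd ∧
      (Pval β (BraidWord.groundState ι)).coeff dd =
        (-1) ^ negCount β ι * RatFunc.X ^ e := by
  have hP := leadingTerm_pval_groundState β hι
  have hX (e : ℤ) : (RatFunc.X : RatFunc ℚ) ^ e ≠ 0 := zpow_ne_zero e RatFunc.X_ne_zero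
  have hc (e : ℤ) : ((-1) ^ negCount β ι * RatFunc.X ^ e : RatFunc ℚ) ≠ 0 :=
    mul_ne_zero (pow_ne_zero _ (neg_ne_zero.2 one_ne_zero)) (hX e)
  obtain ⟨hord, hcoeff⟩ := order_eq_and_leadingCoeff_eq_of_leadingTerm_eq (hc _) hP
  refine ⟨fun t => ne_zero_of_leadingTerm_eq ?_ (leadingTerm_rmat_groundState β hι t),
    ne_zero_of_leadingTerm_eq (hc _) hP, _, _, (β.two_mul_xdeg _).symm,
    (β.two_mul_ell hι.1).symm, hord, by rw [← hord, ← leadingCoeff_eq, hcoeff]⟩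
  split_ifs <;> simp [hX]
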